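/- Let σ>0 and let the noise density be g^σ(z)=φ(z;−σ²/2,σ²). Then π_Z^σ(ϱ_Z^σ) := ∫_ℝ ϱ_Z^σ(z)·π_Z^σ(z) dz = 2·Φ(−σ/√2). Moreover, π_Z^σ(1/ϱ_Z^σ) := ∫_ℝ π_Z^σ(z)/ϱ_Z^σ(z) dz = ∫_ℝ φ(w;0,1)/{1 − ϱ̄_Z^σ(w)} dw, where ϱ̄_Z^σ(w) = Φ(w+σ) − exp(−wσ − σ²/2)·Φ(w). -/

import Mathlib

open MeasureTheory ProbabilityTheory Filter Real
open scoped ENNReal NNReal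

noncomputable section

/-- The standard normal cumulative distribution function `Φ`. -/
def stdNormCDF (x : ℝ) : ℝ := ((gaussianReal 0 1) (Set.Iic x)).toReal

/-- The Gaussian noise density `g^σ(z) = φ(z; −σ²/2, σ²)`. -/
def gNoise (s : ℝ) (z : ℝ) : ℝ :=
  gaussianPDFReal (-(s ^ 2) / 2) (Real.toNNReal (s ^ 2)) z

/-- `π_Z^σ(z) = e^z g^σ(z)`. -/
def piZg (s z : ℝ) : ℝ := Real.exp z * gNoise s z

/-- `ϱ_Z^σ(z) = ∫ g^σ(w) min{1, e^{w−z}} dw`. -/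
def rhoZg (s z : ℝ) : ℝ := ∫ w, gNoise s w * min 1 (Real.exp (w - z))

/-!
Since `e^z g^σ(z)` is the `N(σ²/2, σ²)` density, the substitution `z = σw + σ²/2` turns both
integrals into expectations under `N(0, 1)`, and splitting `min{1, e^{w−z}}` at `w = z` gives
`ϱ_Z^σ(σw + σ²/2) = 1 − Φ(w + σ) + e^{−wσ−σ²/2} Φ(w)`; this is the second identity.
For the first, the exponential tilt turns `E[e^{−Xσ−σ²/2} Φ(X)]` into `E[Φ(X − σ)]`, and
`E[Φ(X + a)] = P(Y − X ≤ a) = Φ(a/√2)` for independent standard normals `X, Y`, because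
`Y − X ~ N(0, 2)`. Finally `1 − Φ(σ/√2) + Φ(−σ/√2) = 2Φ(−σ/√2)`.
-/

open Set

lemma stdNormCDF_nonneg (x : ℝ) : 0 ≤ stdNormCDF x := measureReal_nonneg

lemma stdNormCDF_le_one (x : ℝ) : stdNormCDF x ≤ 1 := measureReal_le_one

lemma monotone_stdNormCDF : Monotone stdNormCDF := fun _ _ hxy =>
  measureReal_mono (Iic_subset_Iic.mpr hxy)

@[fun_prop]
lemma measurable_stdNormCDF : Measurable stdNormCDF := monotone_stdNormCDF.measurable

lemma measureReal_gaussianReal_Iic (m : ℝ) {v : ℝ≥0} (hv : v ≠ 0) (x : ℝ) :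
    (gaussianReal m v).real (Iic x) = stdNormCDF ((x - m) / √v) := by
  have hv' : 0 < √(v : ℝ) := Real.sqrt_pos.mpr (by positivity)
  have hstd : (gaussianReal m v).map (fun y => (y - m) / √v) = gaussianReal 0 1 := by
    rw [show (fun y => (y - m) / √v) = (· / √v) ∘ (· - m) from rfl,
      ← Measure.map_map (by fun_prop) (by fun_prop), gaussianReal_map_sub_const,
      gaussianReal_map_div_const, sub_self, zero_div]
    congr
    ext
    simp [Real.sq_sqrt v.coe_nonneg, hv]
  rw [stdNormCDF, ← measureReal_def, ← hstd,
    map_measureReal_apply (by fun_prop) measurableSet_Iic]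
  congr
  ext y
  simp [div_le_div_iff_of_pos_right hv']

lemma gaussianReal_map_neg_of_mean_zero (v : ℝ≥0) :
    (gaussianReal 0 v).map (fun y => -y) = gaussianReal 0 v := by
  rw [gaussianReal_map_neg, neg_zero]

lemma stdNormCDF_neg (x : ℝ) : stdNormCDF (-x) = 1 - stdNormCDF x := by
  have hnoatom : (gaussianReal 0 1) {x} = 0 := by
    have := nullSingletonClass_gaussianReal (μ := 0) one_ne_zero
    exact measure_singleton x
  rw [stdNormCDF, ← measureReal_def, ← gaussianReal_map_neg_of_mean_zero,
    map_measureReal_apply (by fun_prop) measurableSet_Iic,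
    show (fun y : ℝ => -y) ⁻¹' Iic (-x) = Ici x by ext; simp,
    ← measureReal_congr (Ioi_ae_eq_Ici' hnoatom), ← compl_Iic,
    probReal_compl_eq_one_sub measurableSet_Iic]
  rfl

lemma setIntegral_gaussianPDFReal (m : ℝ) {v : ℝ≥0} (hv : v ≠ 0) (S : Set ℝ) :
    ∫ x in S, gaussianPDFReal m v x = (gaussianReal m v).real S := by
  rw [measureReal_def, gaussianReal_apply_eq_integral m hv,
    ENNReal.toReal_ofReal (setIntegral_nonneg_of_ae (ae_of_all _ (gaussianPDFReal_nonneg m v)))]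

lemma integral_stdNormCDF_sub (a : ℝ) :
    ∫ x, stdNormCDF (a - x) ∂gaussianReal 0 1 = stdNormCDF (a / √2) := by
  have hconv : gaussianReal 0 1 ∗ gaussianReal 0 1 = gaussianReal 0 2 := by
    rw [gaussianReal_conv_gaussianReal, add_zero, one_add_one_eq_two]
  have hfiber (x : ℝ) :
      Prod.mk x ⁻¹' ((fun p : ℝ × ℝ => p.1 + p.2) ⁻¹' Iic a) = Iic (a - x) := by
    ext y
    simp [le_sub_iff_add_le']
  calc ∫ x, stdNormCDF (a - x) ∂gaussianReal 0 1
      = (∫⁻ x, gaussianReal 0 1 (Iic (a - x)) ∂gaussianReal 0 1).toReal := by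
        rw [integral_eq_lintegral_of_nonneg_ae (ae_of_all _ fun x => stdNormCDF_nonneg _)
          (by fun_prop : Measurable fun x => stdNormCDF (a - x)).aestronglyMeasurable]
        simp only [stdNormCDF, ENNReal.ofReal_toReal (measure_ne_top _ _)]
    _ = (gaussianReal 0 2).real (Iic a) := by
        rw [← hconv, measureReal_def, Measure.conv,
          Measure.map_apply (by fun_prop) measurableSet_Iic,
          Measure.prod_apply (measurableSet_Iic.preimage (by fun_prop))]
        simp only [hfiber]
    _ = stdNormCDF (a / √2) := by
        rw [measureReal_gaussianReal_Iic 0 two_ne_zero, sub_zero, NNReal.coe_ofNat]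

lemma integral_stdNormCDF_add (a : ℝ) :
    ∫ x, stdNormCDF (x + a) ∂gaussianReal 0 1 = stdNormCDF (a / √2) := by
  calc ∫ x, stdNormCDF (x + a) ∂gaussianReal 0 1
      = ∫ x, stdNormCDF (a - x) ∂(gaussianReal 0 1).map (fun y => -y) := by
        rw [integral_map (by fun_prop)
          (by fun_prop : Measurable fun x => stdNormCDF (a - x)).aestronglyMeasurable]
        simp only [sub_neg_eq_add, add_comm]
    _ = stdNormCDF (a / √2) := by rw [gaussianReal_map_neg_of_mean_zero, integral_stdNormCDF_sub]

lemma exp_mul_gaussianPDFReal (s x : ℝ) :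
    exp (-(x * s) - s ^ 2 / 2) * gaussianPDFReal 0 1 x = gaussianPDFReal 0 1 (x + s) := by
  simp only [gaussianPDFReal, NNReal.coe_one, sub_zero]
  rw [mul_left_comm, ← Real.exp_add]
  ring_nf

lemma integral_exp_mul_gaussianReal_eq_integral_sub (s : ℝ) (f : ℝ → ℝ) :
    ∫ x, exp (-(x * s) - s ^ 2 / 2) * f x ∂gaussianReal 0 1
      = ∫ x, f (x - s) ∂gaussianReal 0 1 := by
  simp only [integral_gaussianReal_eq_integral_smul one_ne_zero, smul_eq_mul]
  calc ∫ x, gaussianPDFReal 0 1 x * (exp (-(x * s) - s ^ 2 / 2) * f x)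
      = ∫ x, gaussianPDFReal 0 1 (x + s) * f (x + s - s) := by
        congr 1 with x
        rw [add_sub_cancel_right, ← exp_mul_gaussianPDFReal]
        ring
    _ = ∫ x, gaussianPDFReal 0 1 x * f (x - s) :=
        integral_add_right_eq_self (fun x => gaussianPDFReal 0 1 x * f (x - s)) s

lemma piZg_eq_gaussianPDFReal {s : ℝ} (hs : s ≠ 0) (z : ℝ) :
    piZg s z = gaussianPDFReal (s ^ 2 / 2) (Real.toNNReal (s ^ 2)) z := by
  simp only [piZg, gNoise, gaussianPDFReal, Real.coe_toNNReal _ (sq_nonneg s)]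
  rw [mul_left_comm, ← Real.exp_add]
  congr 2
  field_simp
  ring

lemma gaussianReal_map_mul_add (s : ℝ) :
    (gaussianReal 0 1).map (fun w => s * w + s ^ 2 / 2)
      = gaussianReal (s ^ 2 / 2) (Real.toNNReal (s ^ 2)) := by
  rw [show (fun w => s * w + s ^ 2 / 2) = (· + s ^ 2 / 2) ∘ (s * ·) from rfl,
    ← Measure.map_map (by fun_prop) (by fun_prop), gaussianReal_map_const_mul,
    gaussianReal_map_add_const, mul_zero, zero_add, mul_one]
  congr
  simp [sq_nonneg]

lemma integral_mul_piZg {s : ℝ} (hs : s ≠ 0) (f : ℝ → ℝ) :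
    ∫ z, f z * piZg s z = ∫ w, f (s * w + s ^ 2 / 2) ∂gaussianReal 0 1 := by
  have haffine : MeasurableEmbedding fun w : ℝ => s * w + s ^ 2 / 2 :=
    ((Homeomorph.mulLeft₀ s hs).trans (Homeomorph.addRight (s ^ 2 / 2))).measurableEmbedding
  have hv : Real.toNNReal (s ^ 2) ≠ 0 := by simpa using hs
  rw [← haffine.integral_map, gaussianReal_map_mul_add s,
    integral_gaussianReal_eq_integral_smul hv]
  simp only [piZg_eq_gaussianPDFReal hs, smul_eq_mul, mul_comm]

lemma rhoZg_eq {s : ℝ} (hs : 0 < s) (z : ℝ) :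
    rhoZg s z = 1 - stdNormCDF ((z + s ^ 2 / 2) / s)
      + exp (-z) * stdNormCDF ((z - s ^ 2 / 2) / s) := by
  have hv : Real.toNNReal (s ^ 2) ≠ 0 := by simpa using hs.ne'
  have hsqrt : √(Real.toNNReal (s ^ 2) : ℝ) = s := by
    rw [Real.coe_toNNReal _ (sq_nonneg s), Real.sqrt_sq hs.le]
  have hint : Integrable fun w => gNoise s w * min 1 (exp (w - z)) :=
    (integrable_gaussianPDFReal _ _).mul_bdd (by fun_prop) (ae_of_all _ fun w => by
      rw [Real.norm_of_nonneg (le_min zero_le_one (exp_pos _).le)]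
      exact min_le_left _ _)
  have hleft : ∫ w in Iic z, gNoise s w * min 1 (exp (w - z))
      = exp (-z) * stdNormCDF ((z - s ^ 2 / 2) / s) := by
    calc ∫ w in Iic z, gNoise s w * min 1 (exp (w - z))
        = ∫ w in Iic z, exp (-z) * piZg s w := by
          refine setIntegral_congr_fun measurableSet_Iic fun w hw => ?_
          rw [min_eq_right (exp_le_one_iff.mpr (sub_nonpos.mpr hw)), piZg, exp_sub, exp_neg]
          ring
      _ = exp (-z) * stdNormCDF ((z - s ^ 2 / 2) / s) := by
          simp only [piZg_eq_gaussianPDFReal hs.ne']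
          rw [integral_const_mul, setIntegral_gaussianPDFReal _ hv,
            measureReal_gaussianReal_Iic _ hv, hsqrt]
  have hright : ∫ w in Ioi z, gNoise s w * min 1 (exp (w - z))
      = 1 - stdNormCDF ((z + s ^ 2 / 2) / s) := by
    calc ∫ w in Ioi z, gNoise s w * min 1 (exp (w - z))
        = ∫ w in Ioi z, gNoise s w := by
          refine setIntegral_congr_fun measurableSet_Ioi fun w hw => ?_
          rw [min_eq_left (one_le_exp (sub_nonneg.mpr (le_of_lt hw))), mul_one]
      _ = 1 - (gaussianReal (-(s ^ 2) / 2) (Real.toNNReal (s ^ 2))).real (Iic z) := by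
          unfold gNoise
          rw [setIntegral_gaussianPDFReal _ hv, ← compl_Iic,
            probReal_compl_eq_one_sub measurableSet_Iic]
      _ = 1 - stdNormCDF ((z + s ^ 2 / 2) / s) := by
          rw [measureReal_gaussianReal_Iic _ hv, hsqrt, neg_div, sub_neg_eq_add]
  rw [rhoZg, ← intervalIntegral.integral_Iic_add_Ioi hint.integrableOn hint.integrableOn,
    hleft, hright]
  ring

lemma rhoZg_mul_add {s : ℝ} (hs : 0 < s) (w : ℝ) :
    rhoZg s (s * w + s ^ 2 / 2)
      = 1 - (stdNormCDF (w + s) - exp (-(w * s) - s ^ 2 / 2) * stdNormCDF w) := by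
  have h₁ : (s * w + s ^ 2 / 2 + s ^ 2 / 2) / s = w + s := by field_simp; ring
  have h₂ : (s * w + s ^ 2 / 2 - s ^ 2 / 2) / s = w := by field_simp; ring
  rw [rhoZg_eq hs, h₁, h₂, show -(s * w + s ^ 2 / 2) = -(w * s) - s ^ 2 / 2 by ring]
  ring

lemma integral_one_sub_stdNormCDF_add_sub_exp_mul (s : ℝ) :
    ∫ w, 1 - (stdNormCDF (w + s) - exp (-(w * s) - s ^ 2 / 2) * stdNormCDF w) ∂gaussianReal 0 1
      = 2 * stdNormCDF (-s / √2) := by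
  have hbound (x : ℝ) : ‖stdNormCDF x‖ ≤ 1 := by
    rw [Real.norm_of_nonneg (stdNormCDF_nonneg x)]
    exact stdNormCDF_le_one x
  have hshift : Integrable (fun w => stdNormCDF (w + s)) (gaussianReal 0 1) :=
    .of_bound (by fun_prop : Measurable fun w => stdNormCDF (w + s)).aestronglyMeasurable 1
      (ae_of_all _ fun w => hbound _)
  have htilt :
      Integrable (fun w => exp (-(w * s) - s ^ 2 / 2) * stdNormCDF w) (gaussianReal 0 1) := by
    refine (((integrable_exp_mul_gaussianReal (-s)).mul_const (exp (-(s ^ 2 / 2)))).mul_bdd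
      measurable_stdNormCDF.aestronglyMeasurable (ae_of_all _ hbound)).congr
      (ae_of_all _ fun w => ?_)
    simp only [← exp_add]
    ring_nf
  have hdiff : Integrable (fun w => stdNormCDF (w + s) - exp (-(w * s) - s ^ 2 / 2) * stdNormCDF w)
      (gaussianReal 0 1) := hshift.sub htilt
  rw [integral_sub (integrable_const 1) hdiff, integral_sub hshift htilt,
    integral_exp_mul_gaussianReal_eq_integral_sub, integral_const, probReal_univ, one_smul,
    integral_stdNormCDF_add]
  simp only [sub_eq_add_neg _ s, integral_stdNormCDF_add, neg_div, stdNormCDF_neg]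
  ring

/-- under Gaussian noise, `π_Z^σ(ϱ_Z^σ) = 2Φ(−σ/√2)` and
`π_Z^σ(1/ϱ_Z^σ)` has the stated integral representation. -/
theorem statement_18 (s : ℝ) (hs : 0 < s) :
    (∫ z, rhoZg s z * piZg s z) = 2 * stdNormCDF (-s / Real.sqrt 2) ∧
    (∫ z, piZg s z / rhoZg s z)
      = ∫ w, gaussianPDFReal 0 1 w /
          (1 - (stdNormCDF (w + s) - Real.exp (-(w * s) - s ^ 2 / 2) * stdNormCDF w)) := by
  constructor
  · rw [integral_mul_piZg hs.ne' (rhoZg s)]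
    simp only [rhoZg_mul_add hs]
    exact integral_one_sub_stdNormCDF_add_sub_exp_mul s
  · simp only [div_eq_inv_mul (piZg s _)]
    rw [integral_mul_piZg hs.ne' fun z => (rhoZg s z)⁻¹,
      integral_gaussianReal_eq_integral_smul one_ne_zero]
    congr 1 with w
    rw [rhoZg_mul_add hs, smul_eq_mul, ← div_eq_mul_inv]
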